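/- arXiv:1712.03620 — 7 statements merged into one kernel-verified Lean document; each statement's English description precedes it below -/
import Mathlib

section
/- For every positive integer t, there exists a positive integer J(t) such that for any partition of {1,...,J(t)} into t classes, there exist positive integers a and b (not necessarily distinct) such that a, b, and a+b all lie in the same class. -/
/-!
Color each pair `x < y` of `{0, …, J - 1}` by the color of `y - x`. A monochromatic triangle
`i < j < k` of this pair coloring is a Schur triple `a = j - i`, `b = k - j`, `a + b = k - i`,
so the theorem is the triangle case of the finite Ramsey theorem. That case goes by induction
on the number of colors: the least vertex `v` is joined to more than `t n` others, hence by
more than `n` edges of one color `i`; either two of these neighbours are joined by an edge of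
color `i`, closing a triangle with `v`, or they span a graph using only the other `t` colors.
-/

open Finset

section Ramsey

variable {α κ : Type*} [LinearOrder α]

/-- `f x y` is read as the color of the edge `{x, y}` only when `x < y`. -/
def HasMonochromaticTriangle (f : α → α → κ) (S : Finset α) : Prop :=
  ∃ i ∈ S, ∃ j ∈ S, ∃ k ∈ S, i < j ∧ j < k ∧ f i j = f j k ∧ f i j = f i k

theorem HasMonochromaticTriangle.mono {f : α → α → κ} {S T : Finset α}
    (h : HasMonochromaticTriangle f S) (hST : S ⊆ T) : HasMonochromaticTriangle f T := by
  obtain ⟨i, hi, j, hj, k, hk, h⟩ := h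
  exact ⟨i, hST hi, j, hST hj, k, hST hk, h⟩

theorem ramsey_triangle [DecidableEq κ] (t : ℕ) :
    ∃ n, ∀ C : Finset κ, #C ≤ t → ∀ (S : Finset α) (f : α → α → κ),
      (∀ x ∈ S, ∀ y ∈ S, x < y → f x y ∈ C) → n ≤ #S → HasMonochromaticTriangle f S := by
  induction t with
  | zero =>
    refine ⟨2, fun C hC S f hf hS => ?_⟩
    obtain ⟨x, hx, y, hy, hxy⟩ := one_lt_card.mp hS
    have hC_empty : C = ∅ := card_eq_zero.mp (Nat.le_zero.mp hC)
    rcases hxy.lt_or_gt with h | h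
    · simpa [hC_empty] using hf x hx y hy h
    · simpa [hC_empty] using hf y hy x hx h
  | succ t ih =>
    obtain ⟨n, hn⟩ := ih
    refine ⟨(t + 1) * n + 2, fun C hC S f hf hS => ?_⟩
    have hS_ne : S.Nonempty := card_pos.mp (by omega)
    set v := S.min' hS_ne
    have hv : v ∈ S := S.min'_mem hS_ne
    have hv_lt : ∀ x ∈ S.erase v, v < x := fun x hx => S.min'_lt_of_mem_erase_min' hS_ne hx
    obtain ⟨i, hiC, hfiber⟩ : ∃ i ∈ C, n < #{x ∈ S.erase v | f v x = i} := by
      refine exists_lt_card_fiber_of_mul_lt_card_of_maps_to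
        (fun x hx => hf v hv x (mem_of_mem_erase hx) (hv_lt x hx)) ?_
      calc #C * n ≤ (t + 1) * n := Nat.mul_le_mul_right n hC
        _ < #(S.erase v) := by rw [card_erase_of_mem hv]; omega
    set T := {x ∈ S.erase v | f v x = i}
    have hTS : T ⊆ S := (filter_subset _ _).trans (erase_subset _ _)
    by_cases hclose : ∃ x ∈ T, ∃ y ∈ T, x < y ∧ f x y = i
    · obtain ⟨x, hx, y, hy, hxy, hfxy⟩ := hclose
      rw [mem_filter] at hx hy
      exact ⟨v, hv, x, mem_of_mem_erase hx.1, y, mem_of_mem_erase hy.1, hv_lt x hx.1, hxy,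
        by rw [hx.2, hfxy], by rw [hx.2, hy.2]⟩
    · push Not at hclose
      have hC' : #(C.erase i) ≤ t := by rw [card_erase_of_mem hiC]; omega
      refine (hn (C.erase i) hC' T f (fun x hx y hy hxy => ?_) hfiber.le).mono hTS
      exact mem_erase.mpr ⟨hclose x hx y hy hxy, hf x (hTS hx) y (hTS hy) hxy⟩

end Ramsey

theorem schur_general (t : ℕ) :
    ∃ J : ℕ, 0 < J ∧ ∀ c : ℕ → Fin t, ∃ a b : ℕ,
      0 < a ∧ 0 < b ∧ a ≤ J ∧ b ≤ J ∧ a + b ≤ J ∧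
      c a = c b ∧ c a = c (a + b) := by
  obtain ⟨n, hn⟩ := ramsey_triangle (α := ℕ) (κ := Fin t) t
  refine ⟨n + 1, n.succ_pos, fun c => ?_⟩
  obtain ⟨i, -, j, -, k, hk, hij, hjk, hij_jk, hij_ik⟩ :=
    hn univ (card_fin t).le (range n) (fun x y => c (y - x))
      (fun _ _ _ _ _ => mem_univ _) (card_range _).ge
  have hk_lt : k < n := mem_range.mp hk
  have hsum : j - i + (k - j) = k - i := by omega
  refine ⟨j - i, k - j, by omega, by omega, by omega, by omega, by omega, hij_jk, ?_⟩
  rw [hsum]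
  exact hij_ik

/-- Schur's theorem: for every positive integer `t` there is `J` such that every
`t`-coloring of `{1,...,J}` admits `a, b` with `a`, `b`, `a+b` the same color. -/
theorem schur (t : ℕ) (ht : 0 < t) :
    ∃ J : ℕ, 0 < J ∧ ∀ c : ℕ → Fin t, ∃ a b : ℕ,
      0 < a ∧ 0 < b ∧ a ≤ J ∧ b ≤ J ∧ a + b ≤ J ∧
      c a = c b ∧ c a = c (a + b) :=
  schur_general t
end

section
/- For all positive integers t and n, there exists a positive integer J(t,n) such that for any partition of {1,...,J(t,n)} into t classes, there exist positive integers a_1,...,a_n (not necessarily distinct) and a class index ℓ such that for every nonempty subset I ⊆ {1,...,n}, the sum ∑_{i∈I} a_i belongs to class ℓ (in particular all these sums lie in {1,...,J(t,n)}). -/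
/-!
By Hindman's theorem (applied in `ℕ+`, so that all terms are positive) every finite colouring
of `ℕ` admits an infinite sequence all of whose finite sums have one colour; its first `n` terms
serve for that colouring, with bound the sum of those terms. The bound is made uniform by
compactness: having a witness with sums at most `J` depends only on the colours of `0, …, J`,
so the colourings without one form a decreasing sequence of closed sets in the compact space
`ℕ → Fin t`, and a colouring in their intersection would contradict Hindman's theorem.
-/

open Finset

namespace Hindman

theorem FS_map_subset_image {M N : Type*} [AddSemigroup M] [AddSemigroup N] (f : M →ₙ+ N)
    (a : Stream' M) : FS (a.map f) ⊆ f '' FS a := by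
  intro m hm
  generalize hb : a.map f = b at hm
  induction hm generalizing a with
  | head' b =>
    exact ⟨a.head, FS.head a, by rw [← hb, Stream'.head_map]⟩
  | tail' b m _ ih =>
    obtain ⟨p, hp, rfl⟩ := ih a.tail (by rw [← hb, Stream'.tail_map])
    exact ⟨p, FS.tail a p hp, rfl⟩
  | cons' b m _ ih =>
    obtain ⟨p, hp, rfl⟩ := ih a.tail (by rw [← hb, Stream'.tail_map])
    exact ⟨a.head + p, FS.cons a p hp, by rw [map_add, ← hb, Stream'.head_map]⟩

end Hindman

theorem exists_pos_forall_finset_sum_color_eq {κ : Type*} [Finite κ] (c : ℕ → κ) :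
    ∃ (a : ℕ → ℕ) (ℓ : κ), (∀ i, 0 < a i) ∧
      ∀ s : Finset ℕ, s.Nonempty → c (∑ i ∈ s, a i) = ℓ := by
  obtain ⟨_, ⟨ℓ, rfl⟩, b, hb⟩ :=
    Hindman.exists_FS_of_finite_cover (Set.range fun ℓ : κ => {m : ℕ+ | c m = ℓ})
      (Set.finite_range _) (fun m _ => ⟨_, ⟨c m, rfl⟩, rfl⟩)
  refine ⟨fun i => b.get i, ℓ, fun i => (b.get i).pos, fun s hs => ?_⟩
  obtain ⟨m, hm, hsum⟩ := Hindman.FS_map_subset_image PNat.coeAddHom b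
    (Hindman.FS.finsetSum (b.map PNat.coeAddHom) s hs)
  rw [show ∑ i ∈ s, (b.get i : ℕ) = m from hsum.symm]
  exact hb hm

theorem exists_forall_of_forall_exists_of_local {κ : Type*} [Finite κ]
    (P : ℕ → (ℕ → κ) → Prop) (hlocal : ∀ J c c', (∀ m ≤ J, c m = c' m) → P J c → P J c')
    (hmono : ∀ J c, P J c → P (J + 1) c) (hex : ∀ c, ∃ J, P J c) : ∃ J, ∀ c, P J c := by
  let : TopologicalSpace κ := ⊥
  have : DiscreteTopology κ := ⟨rfl⟩
  by_contra! hbad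
  set V : ℕ → Set (ℕ → κ) := fun J => {c | ¬P J c}
  have hopen : ∀ J, IsOpen {c | P J c} := fun J => by
    refine isOpen_iff_forall_mem_open.2 fun c hc => ⟨(range (J + 1) : Set ℕ).pi fun m => {c m},
      fun c' hc' => hlocal J c c' (fun m hm => ?_) hc,
      isOpen_set_pi (finite_toSet _) fun _ _ => isOpen_discrete _, fun m _ => rfl⟩
    exact (hc' m (by simpa [Nat.lt_succ_iff] using hm)).symm
  have hclosed : ∀ J, IsClosed (V J) := fun J => (hopen J).isClosed_compl
  obtain ⟨c, hc⟩ := IsCompact.nonempty_iInter_of_sequence_nonempty_isCompact_isClosed V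
    (fun J _ hc hP => hc (hmono J _ hP)) hbad (hclosed 0).isCompact hclosed
  obtain ⟨J, hJ⟩ := hex c
  exact Set.mem_iInter.1 hc J hJ

theorem finite_sums_general (t n : ℕ) :
    ∃ J : ℕ, 0 < J ∧ ∀ c : ℕ → Fin t, ∃ (a : Fin n → ℕ) (ℓ : Fin t),
      (∀ i, 0 < a i) ∧
      ∀ I : Finset (Fin n), I.Nonempty →
        (∑ i ∈ I, a i) ≤ J ∧ c (∑ i ∈ I, a i) = ℓ := by
  set P : ℕ → (ℕ → Fin t) → Prop := fun J c => ∃ (a : Fin n → ℕ) (ℓ : Fin t),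
    (∀ i, 0 < a i) ∧ ∀ I : Finset (Fin n), I.Nonempty →
      (∑ i ∈ I, a i) ≤ J ∧ c (∑ i ∈ I, a i) = ℓ
  have hmono : ∀ J c, P J c → P (J + 1) c := fun J c ⟨a, ℓ, hpos, h⟩ =>
    ⟨a, ℓ, hpos, fun I hI => ⟨(h I hI).1.trans J.le_succ, (h I hI).2⟩⟩
  have hlocal : ∀ J c c', (∀ m ≤ J, c m = c' m) → P J c → P J c' :=
    fun J c c' hcc' ⟨a, ℓ, hpos, h⟩ =>
      ⟨a, ℓ, hpos, fun I hI => ⟨(h I hI).1, (hcc' _ (h I hI).1) ▸ (h I hI).2⟩⟩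
  have hex : ∀ c, ∃ J, P J c := fun c => by
    obtain ⟨a, ℓ, hpos, hsum⟩ := exists_pos_forall_finset_sum_color_eq c
    refine ⟨∑ i : Fin n, a i, fun i => a i, ℓ, fun i => hpos i, fun I hI => ⟨?_, ?_⟩⟩
    · exact sum_le_sum_of_subset (subset_univ I)
    · simpa [sum_map] using hsum (I.map Fin.valEmbedding) hI.map
  obtain ⟨J, hJ⟩ := exists_forall_of_forall_exists_of_local P hlocal hmono hex
  exact ⟨J + 1, J.succ_pos, fun c => hmono J c (hJ c)⟩

/-- Finite sums generalization of Schur's theorem. -/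
theorem finite_sums (t n : ℕ) (ht : 0 < t) (hn : 0 < n) :
    ∃ J : ℕ, 0 < J ∧ ∀ c : ℕ → Fin t, ∃ (a : Fin n → ℕ) (ℓ : Fin t),
      (∀ i, 0 < a i) ∧
      ∀ I : Finset (Fin n), I.Nonempty →
        (∑ i ∈ I, a i) ≤ J ∧ c (∑ i ∈ I, a i) = ℓ :=
  finite_sums_general t n
end

section
/- For all positive integers t and n, there exists a positive integer J'(t,n) such that for any partition of {1,...,J'(t,n)} into t classes, there exist n pairwise distinct positive integers a_1,...,a_n and a class index ℓ such that for every nonempty subset I ⊆ {1,...,n}, ∑_{i∈I} a_i belongs to class ℓ. -/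
/-!
Hindman's theorem, applied to the positive integers, gives positive `b₀, b₁, …` all of whose
finite sums have the same colour. Summing `b` over consecutive blocks, each longer than the total
of `b` before it, gives strictly increasing terms whose finite sums are still finite sums of `b`.
The bound `J` comes from compactness: if every `J` had a bad colouring `c_J`, a limit of the `c_J`
along a free ultrafilter would agree with `c_J`, for arbitrarily large `J`, on the finitely many
subset sums of the first `n` terms obtained for the limit colouring.
-/

open Filter Function

namespace Hindman

theorem FS_subset_of_add_mem {M : Type*} [AddSemigroup M] {a : Stream' M} {S : Set M}
    (ha : ∀ i, a.get i ∈ S) (hS : ∀ x ∈ S, ∀ y ∈ S, x + y ∈ S) : FS a ⊆ S := by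
  intro m hm
  induction hm with
  | head' a => exact ha 0
  | tail' a m _ ih => exact ih fun i => ha (i + 1)
  | cons' a m _ ih => exact hS _ (ha 0) _ (ih fun i => ha (i + 1))

theorem exists_pos_finsetSum_monochromatic {κ : Type*} [Finite κ] (c : ℕ → κ) :
    ∃ (b : ℕ → ℕ) (ℓ : κ), (∀ i, 0 < b i) ∧
      ∀ s : Finset ℕ, s.Nonempty → c (∑ i ∈ s, b i) = ℓ := by
  have hcover : FS (Stream'.const 1) ⊆ ⋃₀ Set.range fun ℓ => {x | 0 < x ∧ c x = ℓ} := by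
    intro m hm
    have hpos : 0 < m :=
      FS_subset_of_add_mem (a := Stream'.const 1) (S := {x | 0 < x}) (fun _ => by simp)
        (fun _ hx _ _ => Nat.add_pos_left hx _) hm
    exact ⟨_, ⟨c m, rfl⟩, hpos, rfl⟩
  obtain ⟨_, ⟨ℓ, rfl⟩, b, hb⟩ := FS_partition_regular _ _ (Set.finite_range _) hcover
  exact ⟨b.get, ℓ, fun i => (hb (FS.singleton b i)).1,
    fun s hs => (hb (FS.finsetSum b s hs)).2⟩

end Hindman

/-- The block `[blockStart b i, blockStart b (i + 1))` is longer than the sum of `b` before it. -/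
def blockStart (b : ℕ → ℕ) : ℕ → ℕ
  | 0 => 0
  | i + 1 => blockStart b i + (∑ j ∈ Finset.range (blockStart b i), b j) + 1

theorem blockStart_strictMono (b : ℕ → ℕ) : StrictMono (blockStart b) :=
  strictMono_nat_of_lt_succ fun i => by simp only [blockStart]; omega

theorem exists_disjoint_blocks_strictMono_sum (b : ℕ → ℕ) (hb : ∀ i, 0 < b i) :
    ∃ blk : ℕ → Finset ℕ, (∀ i, (blk i).Nonempty) ∧ Pairwise (Disjoint on blk) ∧
      StrictMono fun i => ∑ j ∈ blk i, b j := by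
  set s := blockStart b
  have hs : StrictMono s := blockStart_strictMono b
  refine ⟨fun i => Finset.Ico (s i) (s (i + 1)), fun i => Finset.nonempty_Ico.2 (hs i.lt_succ_self),
    fun i j hij => ?_, strictMono_nat_of_lt_succ fun i => ?_⟩
  · rw [Function.onFun, ← Finset.disjoint_coe, Finset.coe_Ico, Finset.coe_Ico]
    simpa only [Function.onFun, Order.succ_eq_add_one] using
      hs.monotone.pairwise_disjoint_on_Ico_succ hij
  · calc ∑ j ∈ Finset.Ico (s i) (s (i + 1)), b j
        ≤ ∑ j ∈ Finset.range (s (i + 1)), b j :=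
          Finset.sum_le_sum_of_subset fun j hj => by
            simp only [Finset.mem_Ico, Finset.mem_range] at hj ⊢; exact hj.2
      _ < (Finset.Ico (s (i + 1)) (s (i + 1 + 1))).card := by
          simp only [Nat.card_Ico, s, blockStart]; omega
      _ ≤ ∑ j ∈ Finset.Ico (s (i + 1)) (s (i + 1 + 1)), b j := by
          simpa only [smul_eq_mul, mul_one] using Finset.card_nsmul_le_sum _ b 1 fun j _ => hb j

theorem exists_strictMono_finsetSum_monochromatic {κ : Type*} [Finite κ] (c : ℕ → κ) :
    ∃ (v : ℕ → ℕ) (ℓ : κ), (∀ i, 0 < v i) ∧ StrictMono v ∧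
      ∀ I : Finset ℕ, I.Nonempty → c (∑ i ∈ I, v i) = ℓ := by
  obtain ⟨b, ℓ, hb, hc⟩ := Hindman.exists_pos_finsetSum_monochromatic c
  obtain ⟨blk, hne, hdisj, hmono⟩ := exists_disjoint_blocks_strictMono_sum b hb
  refine ⟨fun i => ∑ j ∈ blk i, b j, ℓ, fun i => Finset.sum_pos (fun j _ => hb j) (hne i),
    hmono, fun I hI => ?_⟩
  rw [← Finset.sum_biUnion (hdisj.set_pairwise I)]
  exact hc _ (hI.biUnion fun i _ => hne i)

theorem exists_frequently_forall_eq {α β : Type*} [Finite β] (c : ℕ → α → β) :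
    ∃ L : α → β, ∀ F : Finset α, ∃ᶠ J in atTop, ∀ x ∈ F, c J x = L x := by
  let U := hyperfilter ℕ
  choose L hL using fun x => (U.map fun J => c J x).eq_pure_of_finite
  refine ⟨L, fun F => ?_⟩
  have hU : ∀ᶠ J in U, ∀ x ∈ F, c J x = L x :=
    (Finset.eventually_all F).2 fun x _ =>
      (Ultrafilter.ext_iff.1 (hL x) {L x}).2 rfl
  exact (Ultrafilter.frequently_iff_eventually.2 hU).filter_mono
    (hyperfilter_le_cofinite.trans Nat.cofinite_eq_atTop.le)

theorem finite_sums_distinct_general (t n : ℕ) :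
    ∃ J : ℕ, 0 < J ∧ ∀ c : ℕ → Fin t, ∃ (a : Fin n → ℕ) (ℓ : Fin t),
      (∀ i, 0 < a i) ∧ Function.Injective a ∧
      ∀ I : Finset (Fin n), I.Nonempty →
        (∑ i ∈ I, a i) ≤ J ∧ c (∑ i ∈ I, a i) = ℓ := by
  by_contra! h
  choose c hc using fun J : ℕ => h (J + 1) J.succ_pos
  obtain ⟨L, hL⟩ := exists_frequently_forall_eq c
  obtain ⟨v, ℓ, hv_pos, hv_mono, hv⟩ := exists_strictMono_finsetSum_monochromatic L
  let a : Fin n → ℕ := fun i => v i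
  let sums := (Finset.univ : Finset (Finset (Fin n))).image fun I => ∑ i ∈ I, a i
  obtain ⟨J, hcL, hJ⟩ := ((hL sums).and_eventually (eventually_ge_atTop (∑ i, a i))).exists
  obtain ⟨I, hI, hbad⟩ := hc J a ℓ (fun i => hv_pos i) (hv_mono.injective.comp Fin.val_injective)
  refine hbad ((Finset.sum_le_sum_of_subset I.subset_univ).trans (hJ.trans J.le_succ)) ?_
  rw [hcL _ (Finset.mem_image_of_mem _ (Finset.mem_univ I))]
  simpa using hv _ (hI.map (f := Fin.valEmbedding))

/-- Finite sums theorem with pairwise distinct terms. -/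
theorem finite_sums_distinct (t n : ℕ) (ht : 0 < t) (hn : 0 < n) :
    ∃ J : ℕ, 0 < J ∧ ∀ c : ℕ → Fin t, ∃ (a : Fin n → ℕ) (ℓ : Fin t),
      (∀ i, 0 < a i) ∧ Function.Injective a ∧
      ∀ I : Finset (Fin n), I.Nonempty →
        (∑ i ∈ I, a i) ≤ J ∧ c (∑ i ∈ I, a i) = ℓ :=
  finite_sums_distinct_general t n
end

section
/- Given positive integers k, r, t with k ≥ r, there exists a positive integer N(k,r,t) such that: if S is a finite set with |S| ≥ N(k,r,t) and all nonempty subsets of S are divided into t classes A_1,...,A_t, then there exists a k-element subset K ⊆ S and a sequence of indices i_1,...,i_r ∈ {1,...,t} such that for each j = 1,...,r, every j-element subset of K belongs to A_{i_j}. -/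
/-!
Ramsey's theorem for `m`-subsets is proved by induction on `m` through end-homogeneous sets,
where the colour of an `(m+1)`-set depends only on its least element: removing the least point
`a` of a large set and applying Ramsey for `m`-sets to `B ↦ c (insert a B)` makes `a` a valid
least point, and iterating builds an end-homogeneous set, on which pigeonhole over the colours of
the least points gives a homogeneous one. Applying Ramsey successively for `m = 1, …, r`, each time
inside the set obtained before, makes every level homogeneous at once.
-/

open Finset

namespace Ramsey

variable {α κ : Type*}

def IsHomogeneous (c : Finset α → κ) (m : ℕ) (K : Finset α) : Prop :=
  ∃ i, ∀ B ⊆ K, #B = m → c B = i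

theorem isHomogeneous_zero (c : Finset α → κ) (K : Finset α) : IsHomogeneous c 0 K :=
  ⟨c ∅, fun _ _ hB => by rw [card_eq_zero.mp hB]⟩

theorem IsHomogeneous.mono {c : Finset α → κ} {m : ℕ} {K L : Finset α} (hLK : L ⊆ K)
    (hK : IsHomogeneous c m K) : IsHomogeneous c m L :=
  let ⟨i, hi⟩ := hK
  ⟨i, fun B hB => hi B (hB.trans hLK)⟩

variable [LinearOrder α]

def IsEndHomogeneous (c : Finset α → κ) (m : ℕ) (K : Finset α) (f : α → κ) : Prop :=
  ∀ a ∈ K, ∀ B ⊆ {x ∈ K | a < x}, #B = m → c (insert a B) = f a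

theorem IsEndHomogeneous.insert_of_lt {c : Finset α → κ} {m : ℕ} {K : Finset α} {f : α → κ}
    {a : α} {i : κ} (hK : IsEndHomogeneous c m K f) (haK : ∀ x ∈ K, a < x)
    (ha : ∀ B ⊆ K, #B = m → c (insert a B) = i) :
    IsEndHomogeneous c m (insert a K) (Function.update f a i) := by
  intro x hx B hB hBm
  rcases mem_insert.mp hx with rfl | hxK
  · rw [Function.update_self]
    refine ha B (fun y hy => ?_) hBm
    obtain ⟨hy, hxy⟩ := mem_filter.mp (hB hy)
    exact (mem_insert.mp hy).resolve_left hxy.ne'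
  · have hxa : x ≠ a := (haK x hxK).ne'
    rw [Function.update_of_ne hxa]
    refine hK x hxK B (fun y hy => ?_) hBm
    obtain ⟨hy, hxy⟩ := mem_filter.mp (hB hy)
    have hyK : y ∈ K :=
      (mem_insert.mp hy).resolve_left fun hya => lt_asymm (haK x hxK) (hya ▸ hxy)
    exact mem_filter.mpr ⟨hyK, hxy⟩

theorem exists_isEndHomogeneous {m : ℕ}
    (hm : ∀ k, ∃ N, ∀ S : Finset α, N ≤ #S → ∀ c : Finset α → κ,
      ∃ K ⊆ S, #K = k ∧ IsHomogeneous c m K) (n : ℕ) :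
    ∃ N, ∀ S : Finset α, N ≤ #S → ∀ c : Finset α → κ,
      ∃ K ⊆ S, #K = n ∧ ∃ f, IsEndHomogeneous c m K f := by
  induction n with
  | zero =>
    refine ⟨0, fun S _ c => ⟨∅, empty_subset S, card_empty, fun _ => c ∅, ?_⟩⟩
    simp [IsEndHomogeneous]
  | succ n ih =>
    obtain ⟨N₁, hN₁⟩ := ih
    obtain ⟨N, hN⟩ := hm N₁
    refine ⟨N + 1, fun S hS c => ?_⟩
    have hSne : S.Nonempty := card_pos.mp (by omega)
    set a := S.min' hSne
    have haS : a ∈ S := S.min'_mem hSne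
    obtain ⟨H, hHS, hH, i, hi⟩ :=
      hN (S.erase a) (by rw [card_erase_of_mem haS]; omega) (fun B => c (insert a B))
    obtain ⟨K, hKH, hK, f, hf⟩ := hN₁ H hH.ge c
    have haK : ∀ x ∈ K, a < x := fun x hx => S.min'_lt_of_mem_erase_min' hSne (hHS (hKH hx))
    refine ⟨insert a K, insert_subset haS ((hKH.trans hHS).trans (erase_subset a S)),
      ?_, _, hf.insert_of_lt haK fun B hBK => hi B (hBK.trans hKH)⟩
    rw [card_insert_of_notMem fun haK' => (haK a haK').false, hK]

variable [Fintype κ]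

theorem IsEndHomogeneous.exists_isHomogeneous {c : Finset α → κ} {m k : ℕ} {K₀ : Finset α}
    {f : α → κ} (hK₀ : IsEndHomogeneous c m K₀ f) (hcard : Fintype.card κ * k < #K₀) :
    ∃ K ⊆ K₀, #K = k ∧ IsHomogeneous c (m + 1) K := by
  classical
  obtain ⟨i, -, hi⟩ := exists_lt_card_fiber_of_mul_lt_card_of_maps_to
    (fun a _ => mem_univ (f a)) (by rwa [card_univ])
  obtain ⟨K, hKfib, hK⟩ := exists_subset_card_eq hi.le
  have hKK₀ : K ⊆ K₀ := hKfib.trans (filter_subset _ _)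
  refine ⟨K, hKK₀, hK, i, fun B hBK hB => ?_⟩
  have hBne : B.Nonempty := card_pos.mp (by omega)
  set a := B.min' hBne
  have haB : a ∈ B := B.min'_mem hBne
  have haK : a ∈ K := hBK haB
  have hrest : B.erase a ⊆ {x ∈ K₀ | a < x} := fun x hx =>
    mem_filter.mpr ⟨hKK₀ (hBK (mem_of_mem_erase hx)),
      B.min'_lt_of_mem_erase_min' hBne hx⟩
  calc c B = c (insert a (B.erase a)) := by rw [insert_erase haB]
    _ = f a := hK₀ a (hKK₀ haK) _ hrest (by rw [card_erase_of_mem haB, hB, Nat.add_sub_cancel])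
    _ = i := (mem_filter.mp (hKfib haK)).2

theorem exists_isHomogeneous (m k : ℕ) :
    ∃ N, ∀ S : Finset α, N ≤ #S → ∀ c : Finset α → κ, ∃ K ⊆ S, #K = k ∧ IsHomogeneous c m K := by
  induction m generalizing k with
  | zero =>
    refine ⟨k, fun S hS c => ?_⟩
    obtain ⟨K, hKS, hK⟩ := exists_subset_card_eq hS
    exact ⟨K, hKS, hK, isHomogeneous_zero c K⟩
  | succ m ih =>
    obtain ⟨N, hN⟩ := exists_isEndHomogeneous ih (Fintype.card κ * k + 1)
    refine ⟨N, fun S hS c => ?_⟩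
    obtain ⟨K₀, hK₀S, hK₀, f, hf⟩ := hN S hS c
    obtain ⟨K, hKK₀, hK, hhom⟩ := hf.exists_isHomogeneous (k := k) (by omega)
    exact ⟨K, hKK₀.trans hK₀S, hK, hhom⟩

theorem exists_isHomogeneous_of_le (r k : ℕ) :
    ∃ N, ∀ S : Finset α, N ≤ #S → ∀ c : Finset α → κ,
      ∃ K ⊆ S, #K = k ∧ ∀ m ≤ r, IsHomogeneous c m K := by
  induction r generalizing k with
  | zero =>
    refine ⟨k, fun S hS c => ?_⟩
    obtain ⟨K, hKS, hK⟩ := exists_subset_card_eq hS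
    exact ⟨K, hKS, hK, fun m hm => Nat.le_zero.mp hm ▸ isHomogeneous_zero c K⟩
  | succ r ih =>
    obtain ⟨N₁, hN₁⟩ := ih k
    obtain ⟨N, hN⟩ := exists_isHomogeneous (α := α) (κ := κ) (r + 1) N₁
    refine ⟨N, fun S hS c => ?_⟩
    obtain ⟨K₁, hK₁S, hK₁, htop⟩ := hN S hS c
    obtain ⟨K, hKK₁, hK, hlow⟩ := hN₁ K₁ hK₁.ge c
    refine ⟨K, hKK₁.trans hK₁S, hK, fun m hm => ?_⟩
    rcases hm.lt_or_eq with hm | rfl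
    · exact hlow m (Nat.lt_succ_iff.mp hm)
    · exact htop.mono hKK₁

end Ramsey

theorem iterated_ramsey_general (k r t : ℕ) :
    ∃ N : ℕ, 0 < N ∧ ∀ S : Finset ℕ, N ≤ S.card →
      ∀ c : Finset ℕ → Fin t, ∃ K : Finset ℕ, K ⊆ S ∧ K.card = k ∧
        ∃ idx : Fin r → Fin t, ∀ j : Fin r, ∀ B : Finset ℕ,
          B ⊆ K → B.card = (j : ℕ) + 1 → c B = idx j := by
  obtain ⟨N, hN⟩ := Ramsey.exists_isHomogeneous_of_le (α := ℕ) (κ := Fin t) r k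
  refine ⟨N + 1, N.succ_pos, fun S hS c => ?_⟩
  obtain ⟨K, hKS, hK, hhom⟩ := hN S (by omega) c
  choose idx hidx using fun j : Fin r => hhom (j + 1) j.isLt
  exact ⟨K, hKS, hK, idx, hidx⟩

/-- Iterated Ramsey theorem. -/
theorem iterated_ramsey (k r t : ℕ) (hk : 0 < k) (hr : 0 < r) (ht : 0 < t)
    (hrk : r ≤ k) :
    ∃ N : ℕ, 0 < N ∧ ∀ S : Finset ℕ, N ≤ S.card →
      ∀ c : Finset ℕ → Fin t, ∃ K : Finset ℕ, K ⊆ S ∧ K.card = k ∧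
        ∃ idx : Fin r → Fin t, ∀ j : Fin r, ∀ B : Finset ℕ,
          B ⊆ K → B.card = (j : ℕ) + 1 → c B = idx j :=
  iterated_ramsey_general k r t
end

section
/- Let f be the alternating-sum function: for a nonempty finite set B of positive integers with elements b_1 < ... < b_k, f(B) = ∑ (-1)^j b_j if k is even and ∑ (-1)^{j+1} b_j if k is odd. Suppose P ⊆ A is a consecutive subset of A of even cardinality (i.e., if a ∈ A and x < a < y for some x, y ∈ P, then a ∈ P), P ≠ A, and the number of elements of A greater than max P is odd. Then f(A) = f(A \ P) − f(P). -/
/-- Alternating sum of a list: `a - (b - (c - ...))`. -/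
def altList : List ℕ → ℤ
  | [] => 0
  | a :: l => (a : ℤ) - altList l

/-- Alternating sum of a finite set, signed so the largest element gets `+`. -/
def altSum (B : Finset ℕ) : ℤ := altList ((B.sort (· ≤ ·)).reverse)

/-!
A consecutive block `P` cuts `A` into the elements `L` below `P`, then `P`, then the
elements `R` above `P`. Read from the top, the alternating sum of a union `s ∪ t` with
`s < t` is `f(t) + (-1)^#t f(s)`. As `#R` is odd, `P` and `L` enter `f(A)` with a minus
sign, and as `#P` is even, `L` enters `f(A)` and `f(A \ P) = f(R) - f(L)` with the same sign.
-/

theorem altList_append (l₁ l₂ : List ℕ) :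
    altList (l₁ ++ l₂) = altList l₁ + (-1) ^ l₁.length * altList l₂ := by
  induction l₁ with
  | nil => simp [altList]
  | cons a l ih =>
    simp only [List.cons_append, altList, ih, List.length_cons, pow_succ]
    ring

theorem Finset.sort_union_of_forall_lt {α : Type*} [LinearOrder α] {s t : Finset α}
    (h : ∀ x ∈ s, ∀ y ∈ t, x < y) :
    (s ∪ t).sort (· ≤ ·) = s.sort (· ≤ ·) ++ t.sort (· ≤ ·) := by
  have hdisj : Disjoint s t :=
    Finset.disjoint_left.mpr fun x hs ht => lt_irrefl x (h x hs x ht)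
  refine List.Perm.eq_of_pairwise' (r := (· ≤ ·)) (Finset.pairwise_sort _ _) ?_ ?_
  · refine List.pairwise_append.mpr ⟨Finset.pairwise_sort _ _, Finset.pairwise_sort _ _, ?_⟩
    intro x hx y hy
    exact (h x ((Finset.mem_sort _).1 hx) y ((Finset.mem_sort _).1 hy)).le
  · rw [← Multiset.coe_eq_coe, ← Multiset.coe_add, Finset.sort_eq, Finset.sort_eq,
      Finset.sort_eq, ← Finset.disjUnion_eq_union _ _ hdisj]
    rfl

theorem altSum_union_of_forall_lt {s t : Finset ℕ} (h : ∀ x ∈ s, ∀ y ∈ t, x < y) :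
    altSum (s ∪ t) = altSum t + (-1) ^ t.card * altSum s := by
  rw [altSum, Finset.sort_union_of_forall_lt h, List.reverse_append, altList_append,
    List.length_reverse, Finset.length_sort, altSum, altSum]

theorem Finset.sdiff_eq_filter_lt_min'_union_filter_max'_lt {α : Type*} [LinearOrder α]
    {A P : Finset α} (hP : P.Nonempty)
    (hcons : ∀ a ∈ A, ∀ x ∈ P, ∀ y ∈ P, x < a → a < y → a ∈ P) :
    A \ P = A.filter (· < P.min' hP) ∪ A.filter (P.max' hP < ·) := by
  ext a
  simp only [mem_sdiff, mem_union, mem_filter, ← and_or_left]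
  refine and_congr_right fun ha => ⟨fun haP => ?_, ?_⟩
  · by_contra! h
    rcases h.1.eq_or_lt with rfl | h₁
    · exact haP (P.min'_mem hP)
    rcases h.2.eq_or_lt with rfl | h₂
    · exact haP (P.max'_mem hP)
    exact haP (hcons a ha _ (P.min'_mem hP) _ (P.max'_mem hP) h₁ h₂)
  · rintro (h | h) haP
    · exact (P.min'_le a haP).not_gt h
    · exact (P.le_max' a haP).not_gt h

theorem altSum_sdiff_general (A P : Finset ℕ) (hPA : P ⊆ A) (hP : P.Nonempty)
    (hPe : Even P.card)
    (hcons : ∀ a ∈ A, ∀ x ∈ P, ∀ y ∈ P, x < a → a < y → a ∈ P)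
    (hodd : Odd ((A.filter (fun a => P.max' hP < a)).card)) :
    altSum A = altSum (A \ P) - altSum P := by
  set L := A.filter (· < P.min' hP)
  set R := A.filter (P.max' hP < ·)
  have hAP : A \ P = L ∪ R := Finset.sdiff_eq_filter_lt_min'_union_filter_max'_lt hP hcons
  have hA : A = (L ∪ P) ∪ R := by
    rw [Finset.union_right_comm, ← hAP, Finset.sdiff_union_of_subset hPA]
  have hLP : ∀ x ∈ L, ∀ y ∈ P, x < y := fun x hx y hy =>
    (Finset.mem_filter.1 hx).2.trans_le (P.min'_le y hy)
  have hPR : ∀ x ∈ P, ∀ y ∈ R, x < y := fun x hx y hy =>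
    (P.le_max' x hx).trans_lt (Finset.mem_filter.1 hy).2
  have hLPR : ∀ x ∈ L ∪ P, ∀ y ∈ R, x < y := by
    simp only [Finset.mem_union, or_imp, forall_and]
    exact ⟨fun x hx y hy => (hLP x hx _ (P.min'_mem hP)).trans (hPR _ (P.min'_mem hP) y hy),
      hPR⟩
  rw [hAP, altSum_union_of_forall_lt fun x hx => hLPR x (Finset.mem_union_left P hx), hA,
    altSum_union_of_forall_lt hLPR, altSum_union_of_forall_lt hLP, hodd.neg_one_pow,
    hPe.neg_one_pow]
  ring

/-- F2: removing a consecutive even block with an odd number of larger elements. -/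
theorem altSum_sdiff (A P : Finset ℕ) (hPA : P ⊆ A) (hP : P.Nonempty)
    (hApos : ∀ a ∈ A, 0 < a) (hPe : Even P.card) (hPne : P ≠ A)
    (hcons : ∀ a ∈ A, ∀ x ∈ P, ∀ y ∈ P, x < a → a < y → a ∈ P)
    (hodd : Odd ((A.filter (fun a => P.max' hP < a)).card)) :
    altSum A = altSum (A \ P) - altSum P :=
  altSum_sdiff_general A P hPA hP hPe hcons hodd
end

section
/- There exists a 2-coloring of the nonempty finite subsets of the natural numbers such that there is no infinite set K ⊆ ℕ with the property that for every k ≥ 1, all k-element subsets of K have the same color. Specifically, coloring a finite set S with color 1 if |S| ∈ S and color 2 otherwise has this property. -/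
/-!
Colour `S` by whether `|S| ∈ S`. Any infinite `K` has an element `k ≥ 1`; inside `K` one finds a
`k`-set containing `k` (add `k - 1` further elements of `K`) and a `k`-set avoiding `k` (take `k`
elements of `K \ {k}`), and these two `k`-subsets of `K` get different colours.
-/

namespace Set.Infinite

variable {α : Type*} {K : Set α}

theorem exists_finset_subset_card_eq_notMem (hK : K.Infinite) (a : α) (k : ℕ) :
    ∃ S : Finset α, ↑S ⊆ K ∧ S.card = k ∧ a ∉ S := by
  obtain ⟨S, hSK, hS⟩ := (hK.sdiff (Set.finite_singleton a)).exists_subset_card_eq k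
  exact ⟨S, fun x hx => (hSK hx).1, hS, fun ha => (hSK ha).2 rfl⟩

theorem exists_finset_subset_card_eq_mem (hK : K.Infinite) {a : α} (ha : a ∈ K) {k : ℕ}
    (hk : 1 ≤ k) : ∃ S : Finset α, ↑S ⊆ K ∧ S.card = k ∧ a ∈ S := by
  classical
  obtain ⟨T, hTK, hT, haT⟩ := hK.exists_finset_subset_card_eq_notMem a (k - 1)
  refine ⟨insert a T, ?_, ?_, Finset.mem_insert_self a T⟩
  · rw [Finset.coe_insert]
    exact Set.insert_subset ha hTK
  · rw [Finset.card_insert_of_notMem haT, hT]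
    omega

end Set.Infinite

def cardMemColoring (S : Finset ℕ) : Fin 2 :=
  if S.card ∈ S then 0 else 1

theorem cardMemColoring_eq_zero_iff (S : Finset ℕ) : cardMemColoring S = 0 ↔ S.card ∈ S := by
  unfold cardMemColoring
  split_ifs with h <;> simp [h]

/-- Counterexample to the infinite iterated Ramsey lemma: the coloring by
`|S| ∈ S` admits no infinite set all of whose `k`-subsets are monochromatic
for every `k ≥ 1`. -/
theorem no_infinite_iterated_ramsey :
    ∃ c : Finset ℕ → Fin 2,
      (∀ S : Finset ℕ, c S = 0 ↔ S.card ∈ S) ∧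
      ¬ ∃ K : Set ℕ, K.Infinite ∧
        ∀ k : ℕ, 1 ≤ k → ∃ ℓ : Fin 2, ∀ S : Finset ℕ,
          ↑S ⊆ K → S.card = k → c S = ℓ := by
  refine ⟨cardMemColoring, cardMemColoring_eq_zero_iff, ?_⟩
  rintro ⟨K, hK, hmono⟩
  obtain ⟨k, hkK, hk⟩ := hK.exists_gt 0
  obtain ⟨S, hSK, hS, hkS⟩ := hK.exists_finset_subset_card_eq_mem hkK hk
  obtain ⟨T, hTK, hT, hkT⟩ := hK.exists_finset_subset_card_eq_notMem k k
  obtain ⟨ℓ, hℓ⟩ := hmono k hk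
  have hS0 : cardMemColoring S = 0 := (cardMemColoring_eq_zero_iff S).2 (hS ▸ hkS)
  have hT0 : cardMemColoring T ≠ 0 := fun h => hkT (hT ▸ (cardMemColoring_eq_zero_iff T).1 h)
  exact hT0 (hℓ T hTK hT ▸ hℓ S hSK hS ▸ hS0)
end

section
/- For every 2-coloring of the positive integers {1,...,N} with N sufficiently large, there exist positive integers a_1, a_2, a_3 (not necessarily distinct) and a color ℓ such that all seven sums a_1, a_2, a_3, a_1+a_2, a_1+a_3, a_2+a_3, a_1+a_2+a_3 have color ℓ. -/
/-!
By Hindman's theorem some colour class contains all finite sums of an infinite sequence of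
positive integers. Compactness makes this finite: if every bound `N` had a bad colouring `d N`,
the limit `c` of the `d N` along an ultrafilter finer than `atTop` would contain a monochromatic
pattern, and `d N` agrees with `c` on that finite pattern for some `N` beyond it.
-/

open Filter Finset Hindman

theorem Hindman.FS.pos {a : Stream' ℕ} (ha : ∀ i, 0 < a.get i) {m : ℕ} (hm : m ∈ FS a) :
    0 < m := by
  induction hm with
  | head' a => exact ha 0
  | tail' a m _ ih => exact ih fun i => ha (i + 1)
  | cons' a m _ _ => exact Nat.add_pos_left (ha 0) m

theorem exists_stream_finsetSum_monochromatic {α : Type*} [Finite α] (c : ℕ → α) :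
    ∃ b : Stream' ℕ, (∀ i, 0 < b.get i) ∧
      ∃ ℓ, ∀ t : Finset ℕ, t.Nonempty → c (∑ i ∈ t, b.get i) = ℓ := by
  -- Covering only `FS (const 1)`, the positive integers, by positive parts makes `b` positive.
  let part : α → Set ℕ := fun ℓ => {n | 0 < n ∧ c n = ℓ}
  have hcover : FS (Stream'.const 1) ⊆ ⋃₀ Set.range part := fun n hn =>
    Set.mem_sUnion_of_mem (show n ∈ part (c n) from ⟨FS.pos (fun _ => Nat.one_pos) hn, rfl⟩)
      ⟨c n, rfl⟩
  obtain ⟨_, ⟨ℓ, rfl⟩, b, hb⟩ :=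
    FS_partition_regular _ (Set.range part) (Set.finite_range part) hcover
  exact ⟨b, fun i => (hb (FS.singleton b i)).1, ℓ, fun t ht => (hb (FS.finsetSum b t ht)).2⟩

theorem exists_bound_of_forall_exists_monochromatic {α β ι : Type*} [Finite α] [Preorder β]
    [IsDirectedOrder β] [Nonempty β] (S : ι → Finset β)
    (h : ∀ c : β → α, ∃ i, ∃ ℓ, ∀ x ∈ S i, c x = ℓ) :
    ∃ N, ∀ c : β → α, ∃ i, (∀ x ∈ S i, x ≤ N) ∧ ∃ ℓ, ∀ x ∈ S i, c x = ℓ := by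
  by_contra! hbad
  choose d hd using hbad
  let U := Ultrafilter.of (atTop : Filter β)
  have hlim : ∀ x, ∃ ℓ, ∀ᶠ N in U, d N x = ℓ := fun x =>
    Ultrafilter.eventually_exists_iff.1 (Eventually.of_forall fun N => ⟨d N x, rfl⟩)
  choose c hc using hlim
  obtain ⟨i, ℓ, hi⟩ := h c
  have hgood : ∀ᶠ N in U, ∀ x ∈ S i, x ≤ N ∧ d N x = c x :=
    (eventually_all_finset _).2 fun x _ =>
      ((eventually_ge_atTop x).filter_mono (Ultrafilter.of_le _)).and (hc x)
  obtain ⟨N, hN⟩ := hgood.exists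
  obtain ⟨x, hx, hne⟩ := hd N i (fun x hx => (hN x hx).1) ℓ
  exact hne ((hN x hx).2.trans (hi x hx))

theorem exists_finsetSum_monochromatic {α : Type*} [Finite α] (n : ℕ) :
    ∃ N, ∀ c : ℕ → α, ∃ a : Fin n → ℕ, (∀ i, 0 < a i) ∧ ∃ ℓ, ∀ t : Finset (Fin n),
      t.Nonempty → ∑ i ∈ t, a i ≤ N ∧ c (∑ i ∈ t, a i) = ℓ := by
  let S : {a : Fin n → ℕ // ∀ i, 0 < a i} → Finset ℕ := fun a =>
    ({t : Finset (Fin n) | t.Nonempty} : Finset _).image fun t => ∑ i ∈ t, a.1 i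
  have hS (a) (P : ℕ → Prop) :
      (∀ x ∈ S a, P x) ↔ ∀ t : Finset (Fin n), t.Nonempty → P (∑ i ∈ t, a.1 i) := by
    simp [S]
  obtain ⟨N, hN⟩ := exists_bound_of_forall_exists_monochromatic (α := α) S fun c => by
    obtain ⟨b, hb, ℓ, hbℓ⟩ := exists_stream_finsetSum_monochromatic c
    refine ⟨⟨fun i => b.get i, fun i => hb i⟩, ℓ, (hS _ _).2 fun t ht => ?_⟩
    simpa [sum_map] using hbℓ (t.map Fin.valEmbedding) ht.map
  refine ⟨N, fun c => ?_⟩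
  obtain ⟨a, hbound, ℓ, hℓ⟩ := hN c
  exact ⟨a.1, a.2, ℓ, fun t ht => ⟨(hS a _).1 hbound t ht, (hS a _).1 hℓ t ht⟩⟩

/-- The case `t = 2`, `n = 3` of the finite sums theorem. -/
theorem finite_sums_two_three :
    ∃ N : ℕ, 0 < N ∧ ∀ c : ℕ → Fin 2, ∃ a₁ a₂ a₃ : ℕ,
      0 < a₁ ∧ 0 < a₂ ∧ 0 < a₃ ∧ ∃ ℓ : Fin 2,
      a₁ ≤ N ∧ a₂ ≤ N ∧ a₃ ≤ N ∧ a₁ + a₂ ≤ N ∧ a₁ + a₃ ≤ N ∧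
      a₂ + a₃ ≤ N ∧ a₁ + a₂ + a₃ ≤ N ∧
      c a₁ = ℓ ∧ c a₂ = ℓ ∧ c a₃ = ℓ ∧ c (a₁ + a₂) = ℓ ∧ c (a₁ + a₃) = ℓ ∧
      c (a₂ + a₃) = ℓ ∧ c (a₁ + a₂ + a₃) = ℓ := by
  obtain ⟨N, hN⟩ := exists_finsetSum_monochromatic (α := Fin 2) 3
  refine ⟨N + 1, N.succ_pos, fun c => ?_⟩
  obtain ⟨a, ha, ℓ, h⟩ := hN c
  obtain ⟨b₁, c₁⟩ := h {0} (by simp)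
  obtain ⟨b₂, c₂⟩ := h {1} (by simp)
  obtain ⟨b₃, c₃⟩ := h {2} (by simp)
  obtain ⟨b₁₂, c₁₂⟩ := h {0, 1} (by simp)
  obtain ⟨b₁₃, c₁₃⟩ := h {0, 2} (by simp)
  obtain ⟨b₂₃, c₂₃⟩ := h {1, 2} (by simp)
  obtain ⟨b₁₂₃, c₁₂₃⟩ := h univ univ_nonempty
  simp (disch := decide) only [sum_singleton, sum_pair, Fin.sum_univ_three]
    at b₁ c₁ b₂ c₂ b₃ c₃ b₁₂ c₁₂ b₁₃ c₁₃ b₂₃ c₂₃ b₁₂₃ c₁₂₃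
  exact ⟨a 0, a 1, a 2, ha 0, ha 1, ha 2, ℓ, by omega, by omega, by omega, by omega, by omega,
    by omega, by omega, c₁, c₂, c₃, c₁₂, c₁₃, c₂₃, c₁₂₃⟩
end
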